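/- Let m ≥ 1, δ₀ > -m, and for 1 ≤ r ≤ t define ξ_r^t = ∏_{j=r+1}^t ∏_{i=1}^m (1 + 2/S_{j,i-1}(δ₀)), where S_{j,i-1}(δ₀) = (2m+δ₀)j - 2m + i - 1. Then there exists a constant B > 0 depending only on m and δ₀ such that for all 1 ≤ u < t: ξ_u^t ≤ B·(t/u)^{2m/(2m+δ₀)}. -/

import Mathlib

/-!
Write `c = 2m + δ₀` and `a = 2m / c`, so that `0 < a < 2`. Since `1 + x ≤ eˣ`, the product is at
most the exponential of the sum of the `2 / S_{j,i-1}`. Each `S_{j,i-1} ≥ c (j - a)`, so the `j`-th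
inner sum is at most `a / (j - a) = a / j + O(1 / j²)`. Comparing the harmonic sum over
`u < j ≤ t` with `log (t / u)` and bounding `∑ 1 / j²` by `1` gives
`ξ_u^t ≤ exp (2a² / (2 - a)) (t / u)^a`.
-/

open Finset Real

/-- `S_{j,i-1}(δ) = (2m+δ)j - 2m + i - 1`, here with `jj = i - 1`. -/
noncomputable def Spa (m j jj : ℕ) (δ : ℝ) : ℝ :=
  (2 * m + δ) * j - 2 * m + jj

lemma inv_add_one_le_log_sub_log {x : ℝ} (hx : 0 < x) : (x + 1)⁻¹ ≤ log (x + 1) - log x := by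
  have h := one_sub_inv_le_log_of_pos (div_pos (by linarith : 0 < x + 1) hx)
  rwa [log_div (by linarith) hx.ne', inv_div, one_sub_div (by linarith), add_sub_cancel_left,
    one_div] at h

lemma sum_Ioc_inv_le_log_sub_log {u t : ℕ} (hu : u ≠ 0) (h : u ≤ t) :
    ∑ j ∈ Ioc u t, (j : ℝ)⁻¹ ≤ log t - log u := by
  induction t, h using Nat.le_induction with
  | base => simp
  | succ n hn ih =>
    have hn0 : (0 : ℝ) < n := by exact_mod_cast (Nat.pos_of_ne_zero hu).trans_le hn
    rw [sum_Ioc_succ_top (by omega)]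
    push_cast
    linarith [inv_add_one_le_log_sub_log hn0]

lemma div_sub_le_div_add_inv_sq {a x : ℝ} (ha₀ : 0 ≤ a) (ha₂ : a < 2) (hx : 2 ≤ x) :
    a / (x - a) ≤ a / x + 2 * a ^ 2 / (2 - a) * (x ^ 2)⁻¹ := by
  have hxa : x * (2 - a) / 2 ≤ x - a := by nlinarith
  have hxa₀ : 0 < x * (2 - a) / 2 := by nlinarith
  calc a / (x - a) = a / x + a ^ 2 / (x * (x - a)) := by
        field_simp [show x - a ≠ 0 by linarith, show x ≠ 0 by linarith]
        ring
    _ ≤ a / x + a ^ 2 / (x * (x * (2 - a) / 2)) := by gcongr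
    _ = a / x + 2 * a ^ 2 / (2 - a) * (x ^ 2)⁻¹ := by
        field_simp [show 2 - a ≠ 0 by linarith, show x ≠ 0 by linarith]

lemma sum_Ioc_div_sub_le {a : ℝ} (ha₀ : 0 ≤ a) (ha₂ : a < 2) {u t : ℕ} (hu : u ≠ 0)
    (h : u ≤ t) :
    ∑ j ∈ Ioc u t, a / (j - a) ≤ a * (log t - log u) + 2 * a ^ 2 / (2 - a) := by
  have hK : 0 ≤ 2 * a ^ 2 / (2 - a) := div_nonneg (by positivity) (by linarith)
  have hsq : ∑ j ∈ Ioc u t, ((j : ℝ) ^ 2)⁻¹ ≤ 1 :=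
    (sum_Ioc_inv_sq_le_sub hu h).trans <| (sub_le_self _ (by positivity)).trans <|
      inv_le_one_of_one_le₀ (by exact_mod_cast Nat.one_le_iff_ne_zero.mpr hu)
  calc ∑ j ∈ Ioc u t, a / (j - a)
      ≤ ∑ j ∈ Ioc u t, (a * (j : ℝ)⁻¹ + 2 * a ^ 2 / (2 - a) * ((j : ℝ) ^ 2)⁻¹) := by
        refine sum_le_sum fun j hj => ?_
        have hj : (2 : ℝ) ≤ j := by exact_mod_cast (show 2 ≤ j by grind)
        simpa [div_eq_mul_inv] using div_sub_le_div_add_inv_sq ha₀ ha₂ hj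
    _ = a * ∑ j ∈ Ioc u t, (j : ℝ)⁻¹ + 2 * a ^ 2 / (2 - a) * ∑ j ∈ Ioc u t, ((j : ℝ) ^ 2)⁻¹ := by
        rw [sum_add_distrib, mul_sum, mul_sum]
    _ ≤ a * (log t - log u) + 2 * a ^ 2 / (2 - a) * 1 := by
        gcongr
        exact sum_Ioc_inv_le_log_sub_log hu h
    _ = a * (log t - log u) + 2 * a ^ 2 / (2 - a) := by rw [mul_one]

section Spa

variable {m j : ℕ} {δ : ℝ}

lemma Spa_eq (hδ : 2 * m + δ ≠ 0) (k : ℕ) :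
    Spa m j k δ = (2 * m + δ) * (j - 2 * m / (2 * m + δ)) + k := by
  unfold Spa
  field_simp

lemma Spa_pos (hδ : 0 < 2 * m + δ) (hj : 2 * m / (2 * m + δ) < j) (k : ℕ) :
    0 < Spa m j k δ := by
  rw [Spa_eq hδ.ne']
  have := mul_pos hδ (sub_pos.mpr hj)
  positivity

lemma prod_one_add_two_div_Spa_le_exp (hδ : 0 < 2 * m + δ) (hj : 2 * m / (2 * m + δ) < j) :
    ∏ i ∈ Icc 1 m, (1 + 2 / Spa m j (i - 1) δ) ≤
      exp (2 * m / (2 * m + δ) / (j - 2 * m / (2 * m + δ))) := by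
  calc ∏ i ∈ Icc 1 m, (1 + 2 / Spa m j (i - 1) δ)
      ≤ exp (∑ i ∈ Icc 1 m, 2 / Spa m j (i - 1) δ) :=
        prod_one_add_le_exp_sum _ fun i => (div_pos two_pos (Spa_pos hδ hj _)).le
    _ ≤ exp (∑ _i ∈ Icc 1 m, 2 / ((2 * m + δ) * (j - 2 * m / (2 * m + δ)))) := by
        gcongr with i
        rw [Spa_eq hδ.ne']
        exact le_add_of_nonneg_right (Nat.cast_nonneg _)
    _ = exp (2 * m / (2 * m + δ) / (j - 2 * m / (2 * m + δ))) := by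
        rw [sum_const, Nat.card_Icc, add_tsub_cancel_right, nsmul_eq_mul]
        field_simp

end Spa

theorem xi_bound_general (m : ℕ) (δ₀ : ℝ) (hδ₀ : -(m : ℝ) < δ₀) :
    ∃ B : ℝ, 0 < B ∧ ∀ u t : ℕ, 1 ≤ u → u < t →
      (∏ j ∈ Finset.Icc (u + 1) t, ∏ i ∈ Finset.Icc 1 m,
          (1 + 2 / Spa m j (i - 1) δ₀)) ≤
        B * ((t : ℝ) / u) ^ ((2 * m : ℝ) / (2 * m + δ₀)) := by
  have hc : 0 < 2 * (m : ℝ) + δ₀ := by linarith [(Nat.cast_nonneg m : (0 : ℝ) ≤ m)]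
  set a := 2 * (m : ℝ) / (2 * m + δ₀)
  have ha₀ : 0 ≤ a := by positivity
  have ha₂ : a < 2 := by rw [div_lt_iff₀ hc]; linarith
  refine ⟨exp (2 * a ^ 2 / (2 - a)), exp_pos _, fun u t hu hut => ?_⟩
  have hu₀ : (0 : ℝ) < u := by exact_mod_cast hu
  have ht₀ : (0 : ℝ) < t := hu₀.trans (by exact_mod_cast hut)
  rw [Icc_add_one_left_eq_Ioc]
  have ha_lt : ∀ j ∈ Ioc u t, a < j := fun j hj =>
    ha₂.trans_le (by exact_mod_cast (show 2 ≤ j by grind))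
  calc ∏ j ∈ Ioc u t, ∏ i ∈ Icc 1 m, (1 + 2 / Spa m j (i - 1) δ₀)
      ≤ ∏ j ∈ Ioc u t, exp (a / (j - a)) :=
        prod_le_prod
          (fun j hj => prod_nonneg fun i _ => by have := Spa_pos hc (ha_lt j hj) (i - 1); positivity)
          (fun j hj => prod_one_add_two_div_Spa_le_exp hc (ha_lt j hj))
    _ = exp (∑ j ∈ Ioc u t, a / (j - a)) := (exp_sum _ _).symm
    _ ≤ exp (a * (log t - log u) + 2 * a ^ 2 / (2 - a)) :=
        exp_le_exp.mpr (sum_Ioc_div_sub_le ha₀ ha₂ (by omega) hut.le)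
    _ = exp (2 * a ^ 2 / (2 - a)) * ((t : ℝ) / u) ^ a := by
        rw [rpow_def_of_pos (div_pos ht₀ hu₀), log_div ht₀.ne' hu₀.ne', exp_add, mul_comm a]
        ring

theorem xi_bound (m : ℕ) (hm : 1 ≤ m) (δ₀ : ℝ) (hδ₀ : -(m : ℝ) < δ₀) :
    ∃ B : ℝ, 0 < B ∧ ∀ u t : ℕ, 1 ≤ u → u < t →
      (∏ j ∈ Finset.Icc (u + 1) t, ∏ i ∈ Finset.Icc 1 m,
          (1 + 2 / Spa m j (i - 1) δ₀)) ≤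
        B * ((t : ℝ) / u) ^ ((2 * m : ℝ) / (2 * m + δ₀)) :=
  xi_bound_general m δ₀ hδ₀
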